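/- Let L : ℝ^N → ℝ be a positive definite continuous function and let V : ℝ^N → ℝ be a continuous viscosity supersolution in ℝ^N of max_{α∈A}{ −f(x,α)·DV(x) } = L(x). Fix δ > 0 and C_δ > 0 and assume V is semiconcave with constant C_δ outside B̄_δ, i.e. V(y+h) + V(y−h) − 2V(y) ≤ C_δ|h|² whenever the segment from y−h to y+h lies in { z : |z| > δ }. If trace a(x,α) ≤ L(x)/C_δ for every α ∈ A and every x with |x| > δ, then V is a viscosity supersolution of max_{α∈A}{ −f(x,α)·DV(x) − trace(a(x,α)D²V(x)) } = 0 in the open set { x : |x| > δ }. -/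

import Mathlib

open MeasureTheory Filter Set
open scoped InnerProductSpace ENNReal NNReal Topology

noncomputable section

/-- Euclidean space `ℝ^N`. -/
abbrev EN (N : ℕ) := EuclideanSpace ℝ (Fin N)

/-- Frobenius norm of an `N × M` real matrix. -/
def mnorm {N M : ℕ} (σ : Matrix (Fin N) (Fin M) ℝ) : ℝ :=
  Real.sqrt (∑ i, ∑ j, (σ i j) ^ 2)

/-- Entry `(i,j)` of the Hessian `D²φ(x)`. -/
def hessEntry {N : ℕ} (φ : EN N → ℝ) (x : EN N) (i j : Fin N) : ℝ :=
  iteratedFDeriv ℝ 2 φ x ![EuclideanSpace.single i 1, EuclideanSpace.single j 1]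

/-- `trace (a · D²φ(x))` for a square matrix `a`. -/
def traceTerm {N : ℕ} (a : Matrix (Fin N) (Fin N) ℝ) (φ : EN N → ℝ) (x : EN N) : ℝ :=
  ∑ i, ∑ j, a i j * hessEntry φ x j i

/-- The generator `L^α φ(x) = f(x,α)·Dφ(x) + trace(a(x,α) D²φ(x))`. -/
def gen {N M : ℕ} (f : EN N → EN M → EN N)
    (a : EN N → EN M → Matrix (Fin N) (Fin N) ℝ)
    (φ : EN N → ℝ) (x : EN N) (α : EN M) : ℝ :=
  ⟪f x α, gradient φ x⟫_ℝ + traceTerm (a x α) φ x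

/-- Lipschitz-in-`x` condition on the coefficients, uniformly over `α ∈ A`. -/
def LipCoeff {N M : ℕ} (A : Set (EN M)) (f : EN N → EN M → EN N)
    (σ : EN N → EN M → Matrix (Fin N) (Fin M) ℝ) : Prop :=
  ∃ C : ℝ, ∀ α ∈ A, ∀ x y : EN N,
    ‖f x α - f y α‖ + mnorm (σ x α - σ y α) ≤ C * ‖x - y‖

/-- Convexity of the set `{(a(x,α), f(x,α)) : α ∈ A}` for every `x`. -/
def ConvexCoeff {N M : ℕ} (A : Set (EN M)) (f : EN N → EN M → EN N)
    (a : EN N → EN M → Matrix (Fin N) (Fin N) ℝ) : Prop :=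
  ∀ x : EN N, Convex ℝ {p : Matrix (Fin N) (Fin N) ℝ × EN N | ∃ α ∈ A, p = (a x α, f x α)}

/-- Viscosity supersolution of `max_{α∈A} { -f(x,α)·DV(x) - tr(a(x,α) D²V(x)) } = g(x)` on `O`:
at every local minimum point `x₀ ∈ O` of `V - φ` (relative to `O`), with `φ` of class `C²`,
one has `max_{α∈A} { -f(x₀,α)·Dφ(x₀) - tr(a(x₀,α) D²φ(x₀)) } ≥ g(x₀)` (the maximum over the
compact set `A` being attained, this is expressed by an existential quantifier). -/
def IsSupersolution {N M : ℕ} (A : Set (EN M)) (f : EN N → EN M → EN N)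
    (a : EN N → EN M → Matrix (Fin N) (Fin N) ℝ)
    (O : Set (EN N)) (g : EN N → ℝ) (V : EN N → ℝ) : Prop :=
  ∀ φ : EN N → ℝ, ContDiff ℝ 2 φ → ∀ x₀ ∈ O,
    IsLocalMinOn (fun y => V y - φ y) O x₀ →
    ∃ α ∈ A, g x₀ ≤ -gen f a φ x₀ α

/-- Viscosity subsolution of `max_{α∈A} { -f(x,α)·DU(x) - tr(a(x,α) D²U(x)) } = g(x)` on `O`. -/
def IsSubsolution {N M : ℕ} (A : Set (EN M)) (f : EN N → EN M → EN N)
    (a : EN N → EN M → Matrix (Fin N) (Fin N) ℝ)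
    (O : Set (EN N)) (g : EN N → ℝ) (U : EN N → ℝ) : Prop :=
  ∀ φ : EN N → ℝ, ContDiff ℝ 2 φ → ∀ x₀ ∈ O,
    IsLocalMaxOn (fun y => U y - φ y) O x₀ →
    ∀ α ∈ A, -gen f a φ x₀ α ≤ g x₀

/-- An admissible (weak) control for the initial point `x`: a filtered probability space,
a continuous progressively measurable process `X` with `X 0 = x` a.s., and a progressively
measurable `A`-valued control process `α`, such that for every bounded `C²` test function `φ`
the process `φ(X_t) - ∫₀ᵗ [f(X_s,α_s)·Dφ(X_s) + tr(a(X_s,α_s) D²φ(X_s))] ds` is a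
`P`-martingale (integrable, adapted by progressive measurability of `X` and `α`, and
satisfying the conditional-expectation identity for all `0 ≤ s ≤ t`). -/
structure Control (N M : ℕ) (A : Set (EN M)) (f : EN N → EN M → EN N)
    (a : EN N → EN M → Matrix (Fin N) (Fin N) ℝ) (x : EN N) where
  (Ω : Type)
  [mΩ : MeasurableSpace Ω]
  (P : Measure Ω)
  [isProb : IsProbabilityMeasure P]
  (F : Filtration ℝ mΩ)
  (X : ℝ → Ω → EN N)
  (α : ℝ → Ω → EN M)
  (X_cont : ∀ ω, Continuous fun t => X t ω)
  (X_prog : ProgMeasurable F X)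
  (α_prog : ProgMeasurable F α)
  (α_mem : ∀ t ω, α t ω ∈ A)
  (init : ∀ᵐ ω ∂P, X 0 ω = x)
  (mart_int : ∀ φ : EN N → ℝ, ContDiff ℝ 2 φ → (∃ K, ∀ y, |φ y| ≤ K) →
    ∀ t : ℝ, 0 ≤ t → Integrable
      (fun ω => φ (X t ω) - ∫ s in Ioc (0:ℝ) t, gen f a φ (X s ω) (α s ω)) P)
  (mart : ∀ φ : EN N → ℝ, ContDiff ℝ 2 φ → (∃ K, ∀ y, |φ y| ≤ K) →
    ∀ s t : ℝ, 0 ≤ s → s ≤ t →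
      P[fun ω => φ (X t ω) - ∫ u in Ioc (0:ℝ) t, gen f a φ (X u ω) (α u ω) | F s]
        =ᵐ[P] fun ω => φ (X s ω) - ∫ u in Ioc (0:ℝ) s, gen f a φ (X u ω) (α u ω))

/-- Expected payoff `E_x[ V(X_t) + ∫₀ᵗ l(X_s) ds ]` for a control `c` at time `t ≥ 0`. -/
def payoff {N M : ℕ} {A : Set (EN M)} {f : EN N → EN M → EN N}
    {a : EN N → EN M → Matrix (Fin N) (Fin N) ℝ} {x : EN N}
    (c : Control N M A f a x) (V l : EN N → ℝ) (t : ℝ) : ℝ :=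
  ∫ ω, (V (c.X t ω) + ∫ s in Ioc (0:ℝ) t, l (c.X s ω)) ∂c.P

/-! Let `φ` touch `V` from below at `x₀`. The second central differences of `φ` at `x₀` are then
bounded by those of `V`, hence by `C_δ |h|²` by semiconcavity, and a second-order Taylor expansion
turns this into `D²φ(x₀) ≤ C_δ I`. Writing `a = ½ σ σᵀ` gives
`tr(a D²φ(x₀)) = ½ ∑ₖ D²φ(x₀)(σₖ, σₖ) ≤ C_δ tr a ≤ L(x₀)`, where `σₖ` are the columns of
`σ(x₀, α)`, and the first-order supersolution property supplies an `α` with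
`-f(x₀, α)·Dφ(x₀) ≥ L(x₀)`. -/

def secondCentralDiff {E : Type*} [AddCommGroup E] (φ : E → ℝ) (x h : E) : ℝ :=
  φ (x + h) + φ (x - h) - 2 * φ x

theorem IsLocalMin.secondCentralDiff_le {E : Type*} [AddCommGroup E] [TopologicalSpace E]
    [IsTopologicalAddGroup E] {V φ : E → ℝ} {x : E} (hmin : IsLocalMin (fun y => V y - φ y) x) :
    ∀ᶠ h in 𝓝 0, secondCentralDiff φ x h ≤ secondCentralDiff V x h := by
  have hadd : Tendsto (fun h : E => x + h) (𝓝 0) (𝓝 x) := by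
    simpa using tendsto_const_nhds.add (tendsto_id (x := 𝓝 (0 : E)))
  have hsub : Tendsto (fun h : E => x - h) (𝓝 0) (𝓝 x) := by
    simpa using tendsto_const_nhds.sub (tendsto_id (x := 𝓝 (0 : E)))
  filter_upwards [hadd.eventually hmin, hsub.eventually hmin] with h h₁ h₂
  simp only [secondCentralDiff]
  linarith

section NormedSpace

variable {E : Type*} [NormedAddCommGroup E] [NormedSpace ℝ E]

theorem IsOpen.eventually_segment_subset {O : Set E} (hO : IsOpen O) {x : E} (hx : x ∈ O) :
    ∀ᶠ h in 𝓝 0, segment ℝ (x - h) (x + h) ⊆ O := by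
  obtain ⟨ε, hε, hball⟩ := Metric.isOpen_iff.mp hO x hx
  filter_upwards [Metric.ball_mem_nhds 0 hε] with h hh
  rw [mem_ball_zero_iff] at hh
  refine ((convex_ball x ε).segment_subset ?_ ?_).trans hball <;>
    simpa [dist_eq_norm] using hh

theorem fderiv_fderiv_apply_self_le_of_secondCentralDiff_le {φ : E → ℝ} (hφ : ContDiff ℝ 2 φ)
    {x : E} {C : ℝ} (hC : ∀ᶠ h in 𝓝 0, secondCentralDiff φ x h ≤ C * ‖h‖ ^ 2) (v : E) :
    fderiv ℝ (fderiv ℝ φ) x v v ≤ C * ‖v‖ ^ 2 := by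
  set B := fderiv ℝ (fderiv ℝ φ) x
  have taylor : ∀ w : E, (fun t : ℝ => φ (x + t • w) - φ x - t * fderiv ℝ φ x w
      - t ^ 2 / 2 * B w w) =o[𝓝[>] 0] fun t => t ^ 2 := by
    intro w
    have hφ' : ∀ y ∈ interior (univ : Set E), HasFDerivAt φ (fderiv ℝ φ y) y := fun y _ =>
      (hφ.differentiable (by norm_num) y).hasFDerivAt
    have hφ'' : HasFDerivWithinAt (fderiv ℝ φ) B (interior univ) x :=
      ((hφ.fderiv_right (m := 1) (by norm_num)).differentiable (by norm_num) x).hasFDerivAt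
        |>.hasFDerivWithinAt
    simpa using convex_univ.taylor_approx_two_segment hφ' (mem_univ x) hφ'' (v := 0) (w := w)
      (by simp) (by simp)
  have hlim : Tendsto (fun t : ℝ => secondCentralDiff φ x (t • v) / t ^ 2) (𝓝[>] 0)
      (𝓝 (B v v)) := by
    have hrem := ((taylor v).add (taylor (-v))).tendsto_div_nhds_zero.add_const (B v v)
    rw [zero_add] at hrem
    refine hrem.congr' ?_
    filter_upwards [self_mem_nhdsWithin] with t (ht : 0 < t)
    simp only [secondCentralDiff, map_neg, neg_apply, smul_neg, ← sub_eq_add_neg]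
    field_simp
    ring
  have hbound : ∀ᶠ t in 𝓝[>] (0 : ℝ), secondCentralDiff φ x (t • v) / t ^ 2 ≤ C * ‖v‖ ^ 2 := by
    have hsmul : Tendsto (fun t : ℝ => t • v) (𝓝[>] 0) (𝓝 0) := by
      simpa using (tendsto_id.smul_const v).mono_left (nhdsWithin_le_nhds (a := (0 : ℝ)))
    filter_upwards [hsmul.eventually hC, self_mem_nhdsWithin] with t ht (htpos : 0 < t)
    rw [div_le_iff₀ (by positivity)]
    calc _ ≤ C * ‖t • v‖ ^ 2 := ht
      _ = C * ‖v‖ ^ 2 * t ^ 2 := by rw [norm_smul, Real.norm_eq_abs, mul_pow, sq_abs]; ring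
  exact le_of_tendsto hlim hbound

end NormedSpace

theorem EuclideanSpace.apply_apply_eq_sum {ι : Type*} [Fintype ι] [DecidableEq ι]
    (B : EuclideanSpace ℝ ι →L[ℝ] EuclideanSpace ℝ ι →L[ℝ] ℝ) (v w : EuclideanSpace ℝ ι) :
    B v w = ∑ i, ∑ j, v i * w j * B (EuclideanSpace.single i 1) (EuclideanSpace.single j 1) := by
  conv_lhs =>
    rw [← (EuclideanSpace.basisFun ι ℝ).sum_repr v, ← (EuclideanSpace.basisFun ι ℝ).sum_repr w]
  simp only [basisFun_repr, basisFun_apply, map_sum, map_smul, sum_apply, smul_apply, smul_eq_mul,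
    Finset.mul_sum]
  rw [Finset.sum_comm]
  exact Finset.sum_congr rfl fun i _ => Finset.sum_congr rfl fun j _ => by ring

theorem hessEntry_eq_fderiv_fderiv {N : ℕ} (φ : EN N → ℝ) (x : EN N) (i j : Fin N) :
    hessEntry φ x i j =
      fderiv ℝ (fderiv ℝ φ) x (EuclideanSpace.single i 1) (EuclideanSpace.single j 1) := by
  simp [hessEntry, iteratedFDeriv_two_apply]

section HalfMulTranspose

variable {N : ℕ} {κ : Type*} [Fintype κ] (s : Matrix (Fin N) κ ℝ)

theorem traceTerm_half_mul_transpose (φ : EN N → ℝ) (x : EN N) :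
    traceTerm ((2⁻¹ : ℝ) • (s * s.transpose)) φ x =
      2⁻¹ * ∑ k, fderiv ℝ (fderiv ℝ φ) x (WithLp.toLp 2 (s.transpose k))
        (WithLp.toLp 2 (s.transpose k)) := by
  have hcol : ∀ k, fderiv ℝ (fderiv ℝ φ) x (WithLp.toLp 2 (s.transpose k))
      (WithLp.toLp 2 (s.transpose k)) = ∑ i, ∑ j, s i k * s j k * hessEntry φ x i j := fun k => by
    rw [EuclideanSpace.apply_apply_eq_sum]
    simp only [hessEntry_eq_fderiv_fderiv]
    rfl
  simp only [hcol, traceTerm, Matrix.smul_apply, Matrix.mul_apply, Matrix.transpose_apply,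
    smul_eq_mul, Finset.mul_sum, Finset.sum_mul]
  conv_lhs => rw [Finset.sum_congr rfl fun i _ => Finset.sum_comm, Finset.sum_comm]
  refine Finset.sum_congr rfl fun k _ => ?_
  rw [Finset.sum_comm]
  exact Finset.sum_congr rfl fun i _ => Finset.sum_congr rfl fun j _ => by ring

theorem trace_half_mul_transpose :
    Matrix.trace ((2⁻¹ : ℝ) • (s * s.transpose)) =
      2⁻¹ * ∑ k, ‖WithLp.toLp 2 (s.transpose k)‖ ^ 2 := by
  simp only [Matrix.trace, Matrix.diag, Matrix.smul_apply, Matrix.mul_apply,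
    Matrix.transpose_apply, EuclideanSpace.norm_sq_eq, Real.norm_eq_abs, sq_abs, smul_eq_mul,
    Finset.mul_sum]
  rw [Finset.sum_comm]
  exact Finset.sum_congr rfl fun i _ => Finset.sum_congr rfl fun k _ => by ring

theorem traceTerm_half_mul_transpose_le {φ : EN N → ℝ} {x : EN N} {C : ℝ}
    (hC : ∀ v, fderiv ℝ (fderiv ℝ φ) x v v ≤ C * ‖v‖ ^ 2) :
    traceTerm ((2⁻¹ : ℝ) • (s * s.transpose)) φ x ≤
      C * Matrix.trace ((2⁻¹ : ℝ) • (s * s.transpose)) := by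
  rw [traceTerm_half_mul_transpose, trace_half_mul_transpose, mul_left_comm]
  calc _ ≤ 2⁻¹ * ∑ k, C * ‖WithLp.toLp 2 (s.transpose k)‖ ^ 2 := by gcongr with k; exact hC _
    _ = _ := by rw [← Finset.mul_sum]

end HalfMulTranspose

theorem stmt18_general {N M : ℕ}
    (A : Set (EN M))
    (f : EN N → EN M → EN N) (σ : EN N → EN M → Matrix (Fin N) (Fin M) ℝ)
    (a : EN N → EN M → Matrix (Fin N) (Fin N) ℝ)
    (ha : ∀ y β, a y β = (2⁻¹ : ℝ) • (σ y β * (σ y β).transpose))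
    (L : EN N → ℝ)
    (V : EN N → ℝ)
    (hVsuper1 : ∀ φ : EN N → ℝ, ContDiff ℝ 2 φ → ∀ x₀ : EN N,
      IsLocalMinOn (fun y => V y - φ y) univ x₀ →
      ∃ α ∈ A, L x₀ ≤ -⟪f x₀ α, gradient φ x₀⟫_ℝ)
    (δ Cδ : ℝ) (hCδ : 0 < Cδ)
    (hsc : ∀ y h : EN N, segment ℝ (y - h) (y + h) ⊆ {z : EN N | δ < ‖z‖} →
      V (y + h) + V (y - h) - 2 * V y ≤ Cδ * ‖h‖ ^ 2)
    (htrace : ∀ α ∈ A, ∀ x : EN N, δ < ‖x‖ → Matrix.trace (a x α) ≤ L x / Cδ) :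
    IsSupersolution A f a {x : EN N | δ < ‖x‖} (fun _ => (0:ℝ)) V := by
  intro φ hφ x₀ hx₀ hmin
  have hO : IsOpen {x : EN N | δ < ‖x‖} := isOpen_lt continuous_const continuous_norm
  have hmin' : IsLocalMin (fun y => V y - φ y) x₀ := hmin.isLocalMin (hO.mem_nhds hx₀)
  obtain ⟨α, hαA, hα⟩ := hVsuper1 φ hφ x₀ (hmin'.on univ)
  have hφ_semiconcave : ∀ᶠ h in 𝓝 0, secondCentralDiff φ x₀ h ≤ Cδ * ‖h‖ ^ 2 := by
    filter_upwards [hmin'.secondCentralDiff_le, hO.eventually_segment_subset hx₀] with h hφV hseg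
    exact hφV.trans (hsc x₀ h hseg)
  have htraceTerm : traceTerm (a x₀ α) φ x₀ ≤ Cδ * Matrix.trace (a x₀ α) := by
    rw [ha]
    exact traceTerm_half_mul_transpose_le _
      (fderiv_fderiv_apply_self_le_of_secondCentralDiff_le hφ hφ_semiconcave)
  have hCtrace : Cδ * Matrix.trace (a x₀ α) ≤ L x₀ :=
    (le_div_iff₀' hCδ).mp (htrace α hαA x₀ hx₀)
  refine ⟨α, hαA, ?_⟩
  simp only [gen]
  linarith

/-- Example 7.1: a semiconcave Lyapunov function for the deterministic
system remains a (viscosity) Lyapunov function for the stochastic perturbation under the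
small intensity condition `tr a(x,α) ≤ L(x)/C_δ` for `|x| > δ`. -/
theorem stmt18 {N M : ℕ} (hN : 1 ≤ N) (hM : 1 ≤ M)
    (A : Set (EN M)) (hA : IsCompact A)
    (f : EN N → EN M → EN N) (σ : EN N → EN M → Matrix (Fin N) (Fin M) ℝ)
    (hf : ContinuousOn (fun p : EN N × EN M => f p.1 p.2) (univ ×ˢ A))
    (hσ : ContinuousOn (fun p : EN N × EN M => σ p.1 p.2) (univ ×ˢ A))
    (hlip : LipCoeff A f σ)
    (a : EN N → EN M → Matrix (Fin N) (Fin N) ℝ)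
    (ha : ∀ y β, a y β = (2⁻¹ : ℝ) • (σ y β * (σ y β).transpose))
    (hconv : ConvexCoeff A f a)
    (L : EN N → ℝ) (hLc : Continuous L) (hL00 : L 0 = 0) (hLpos : ∀ x : EN N, x ≠ 0 → 0 < L x)
    (V : EN N → ℝ) (hVc : Continuous V)
    (hVsuper1 : ∀ φ : EN N → ℝ, ContDiff ℝ 2 φ → ∀ x₀ : EN N,
      IsLocalMinOn (fun y => V y - φ y) univ x₀ →
      ∃ α ∈ A, L x₀ ≤ -⟪f x₀ α, gradient φ x₀⟫_ℝ)
    (δ Cδ : ℝ) (hδ : 0 < δ) (hCδ : 0 < Cδ)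
    (hsc : ∀ y h : EN N, segment ℝ (y - h) (y + h) ⊆ {z : EN N | δ < ‖z‖} →
      V (y + h) + V (y - h) - 2 * V y ≤ Cδ * ‖h‖ ^ 2)
    (htrace : ∀ α ∈ A, ∀ x : EN N, δ < ‖x‖ → Matrix.trace (a x α) ≤ L x / Cδ) :
    IsSupersolution A f a {x : EN N | δ < ‖x‖} (fun _ => (0:ℝ)) V :=
  stmt18_general A f σ a ha L V hVsuper1 δ Cδ hCδ hsc htrace
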